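/- There exist two non-isomorphic connected split graphs G₁ and G₂ on the same vertex set of cardinality 10, both of diameter 3, such that ∂(G₁) = ∂(G₂), |∂(G₁)| = 9, and d_{G₁}(x,y) = d_{G₂}(x,y) for all x, y ∈ ∂(G₁). Hence not every split graph of diameter 3 is a BDM graph. -/

import Mathlib

open SimpleGraph

def gBoundary {V : Type*} (G : SimpleGraph V) : Set V :=
  {v | ∃ u, ∀ w, G.Adj v w → G.dist u w ≤ G.dist u v}

noncomputable def gEcc {V : Type*} [Fintype V] (G : SimpleGraph V) (v : V) : ℕ :=
  Finset.univ.sup fun w => G.dist v w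

noncomputable def gDiam {V : Type*} [Fintype V] (G : SimpleGraph V) : ℕ :=
  Finset.univ.sup fun v => gEcc G v

noncomputable def gRad {V : Type*} [Fintype V] (G : SimpleGraph V) : ℕ :=
  sInf (Set.range fun v => gEcc G v)

def IsBDM {V : Type*} (G : SimpleGraph V) : Prop :=
  ∀ G' : SimpleGraph V, G'.Connected → gBoundary G' = gBoundary G →
    (∀ x ∈ gBoundary G, ∀ y ∈ gBoundary G, G'.dist x y = G.dist x y) →
    Nonempty (G ≃g G')

def IsCutVertex {V : Type*} (G : SimpleGraph V) (v : V) : Prop :=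
  ¬ (G.induce {u | u ≠ v}).Connected

def Chordal {V : Type*} (G : SimpleGraph V) : Prop :=
  ∀ n, 4 ≤ n → IsEmpty (cycleGraph n ↪g G)

def DistHereditary {V : Type*} (G : SimpleGraph V) : Prop :=
  ∀ s : Set V, (G.induce s).Connected →
    ∀ u v : s, (G.induce s).dist u v = G.dist u v

def Ptolemaic {V : Type*} (G : SimpleGraph V) : Prop :=
  Chordal G ∧ DistHereditary G

def IsIntervalGraph {V : Type*} (G : SimpleGraph V) : Prop :=
  ∃ a b : V → ℝ, (∀ v, a v ≤ b v) ∧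
    ∀ u v : V, u ≠ v →
      (G.Adj u v ↔ (Set.Icc (a u) (b u) ∩ Set.Icc (a v) (b v)).Nonempty)

def IsBipartiteGraph {V : Type*} (G : SimpleGraph V) : Prop :=
  ∃ s : Set V, ∀ a b : V, G.Adj a b → ((a ∈ s ∧ b ∉ s) ∨ (a ∉ s ∧ b ∈ s))

def IsSplitGraph {V : Type*} (G : SimpleGraph V) : Prop :=
  ∃ K : Set V, (∀ a ∈ K, ∀ b ∈ K, a ≠ b → G.Adj a b) ∧
    (∀ a ∉ K, ∀ b ∉ K, ¬ G.Adj a b)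

def IsFanCenter {V : Type*} (G : SimpleGraph V) (u : V) : Prop :=
  ∃ x : Fin 4 → V, Function.Injective x ∧ (∀ i, x i ≠ u) ∧
    (∀ i, G.Adj u (x i)) ∧
    (∀ i j : Fin 4, G.Adj (x i) (x j) ↔ (i.val + 1 = j.val ∨ j.val + 1 = i.val))

/-!
Both graphs are split graphs on the clique `{0, …, 4}`, and they differ only in the edges at the
clique vertex `1`: it is adjacent to `9` in `graph₁` and to `5, 7` in `graph₂`. Vertex `1` is the
unique non-boundary vertex of either graph, and moving its edges changes no distance between two
other vertices, while the edge counts `23 ≠ 24` tell the graphs apart. All distances are read off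
explicit tables, which are certified by purely local conditions that `decide` can check.
-/

namespace SimpleGraph

variable {V : Type*}

section Potential

variable {G : SimpleGraph V} {v : V} {f : V → ℕ}

theorem le_length_of_le_succ_of_adj (hf : ∀ x y, G.Adj x y → f x ≤ f y + 1) (hv : f v = 0)
    {x : V} (p : G.Walk x v) : f x ≤ p.length := by
  induction p with
  | nil => simp [hv]
  | cons hxy q ih =>
    rw [Walk.length_cons]
    exact (hf _ _ hxy).trans (Nat.add_le_add_right (ih hv) 1)

theorem exists_walk_length_eq_of_descent (hv : f v = 0)
    (hdesc : ∀ x, x ≠ v → ∃ y, G.Adj x y ∧ f y + 1 = f x) (x : V) :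
    ∃ p : G.Walk x v, p.length = f x := by
  induction hn : f x generalizing x with
  | zero =>
    by_cases hxv : x = v
    · subst hxv; exact ⟨.nil, rfl⟩
    · obtain ⟨y, -, hy⟩ := hdesc x hxv
      omega
  | succ n ih =>
    have hxv : x ≠ v := by rintro rfl; omega
    obtain ⟨y, hxy, hy⟩ := hdesc x hxv
    obtain ⟨p, hp⟩ := ih y (by omega)
    exact ⟨.cons hxy p, by rw [Walk.length_cons, hp]⟩

end Potential

def IsDistCertificate (G : SimpleGraph V) (D : V → V → ℕ) : Prop :=
  (∀ v, D v v = 0) ∧ (∀ x y v, G.Adj x y → D x v ≤ D y v + 1) ∧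
    ∀ x v, x ≠ v → ∃ y, G.Adj x y ∧ D y v + 1 = D x v

namespace IsDistCertificate

variable {G : SimpleGraph V} {D : V → V → ℕ}

theorem exists_walk (hD : G.IsDistCertificate D) (x v : V) :
    ∃ p : G.Walk x v, p.length = D x v :=
  exists_walk_length_eq_of_descent (f := (D · v)) (hD.1 v) (fun x => hD.2.2 x v) x

theorem connected [Nonempty V] (hD : G.IsDistCertificate D) : G.Connected :=
  ⟨fun x v => (hD.exists_walk x v).elim fun p _ => ⟨p⟩⟩

theorem dist_eq (hD : G.IsDistCertificate D) (x v : V) : G.dist x v = D x v := by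
  obtain ⟨p, hp⟩ := hD.exists_walk x v
  refine le_antisymm (hp ▸ G.dist_le p) ?_
  obtain ⟨q, hq⟩ := Reachable.exists_walk_length_eq_dist ⟨p⟩
  exact hq ▸ le_length_of_le_succ_of_adj (fun x y => hD.2.1 x y v) (hD.1 v) q

theorem gBoundary_eq (hD : G.IsDistCertificate D) :
    gBoundary G = {v | ∃ u, ∀ w, G.Adj v w → D u w ≤ D u v} := by
  simp only [gBoundary, hD.dist_eq]

theorem gDiam_eq [Fintype V] (hD : G.IsDistCertificate D) :
    gDiam G = Finset.univ.sup fun v => Finset.univ.sup (D v) := by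
  simp only [gDiam, gEcc, hD.dist_eq]

end IsDistCertificate

/-- `N a` matters only for `a ∉ K`, and only through `N a ∩ K`. -/
def splitOf (K : Finset V) (N : V → Finset V) : SimpleGraph V :=
  fromRel fun a b => b ∈ K ∧ (a ∈ K ∨ b ∈ N a)

instance [DecidableEq V] (K : Finset V) (N : V → Finset V) : DecidableRel (splitOf K N).Adj :=
  fun a b => inferInstanceAs (Decidable (a ≠ b ∧ _))

theorem isSplitGraph_splitOf (K : Finset V) (N : V → Finset V) : IsSplitGraph (splitOf K N) :=
  ⟨K, fun _ ha _ hb hab => ⟨hab, .inl ⟨hb, .inl ha⟩⟩,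
    fun _ ha _ hb ⟨_, h⟩ => h.elim (fun h => hb h.1) (fun h => ha h.1)⟩

end SimpleGraph

abbrev graph₁ : SimpleGraph (Fin 10) :=
  splitOf {0, 1, 2, 3, 4} ![∅, ∅, ∅, ∅, ∅, {2, 3}, {1, 2, 4}, {2, 3}, {0, 1, 3}, {0, 1, 4}]

abbrev graph₂ : SimpleGraph (Fin 10) :=
  splitOf {0, 1, 2, 3, 4} ![∅, ∅, ∅, ∅, ∅, {1, 2, 3}, {1, 2, 4}, {1, 2, 3}, {0, 1, 3}, {0, 4}]

def dist₁ : Fin 10 → Fin 10 → ℕ :=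
  ![![0, 1, 1, 1, 1, 2, 2, 2, 1, 1],
    ![1, 0, 1, 1, 1, 2, 1, 2, 1, 1],
    ![1, 1, 0, 1, 1, 1, 1, 1, 2, 2],
    ![1, 1, 1, 0, 1, 1, 2, 1, 1, 2],
    ![1, 1, 1, 1, 0, 2, 1, 2, 2, 1],
    ![2, 2, 1, 1, 2, 0, 2, 2, 2, 3],
    ![2, 1, 1, 2, 1, 2, 0, 2, 2, 2],
    ![2, 2, 1, 1, 2, 2, 2, 0, 2, 3],
    ![1, 1, 2, 1, 2, 2, 2, 2, 0, 2],
    ![1, 1, 2, 2, 1, 3, 2, 3, 2, 0]]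

def dist₂ : Fin 10 → Fin 10 → ℕ :=
  ![![0, 1, 1, 1, 1, 2, 2, 2, 1, 1],
    ![1, 0, 1, 1, 1, 1, 1, 1, 1, 2],
    ![1, 1, 0, 1, 1, 1, 1, 1, 2, 2],
    ![1, 1, 1, 0, 1, 1, 2, 1, 1, 2],
    ![1, 1, 1, 1, 0, 2, 1, 2, 2, 1],
    ![2, 1, 1, 1, 2, 0, 2, 2, 2, 3],
    ![2, 1, 1, 2, 1, 2, 0, 2, 2, 2],
    ![2, 1, 1, 1, 2, 2, 2, 0, 2, 3],
    ![1, 1, 2, 1, 2, 2, 2, 2, 0, 2],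
    ![1, 2, 2, 2, 1, 3, 2, 3, 2, 0]]

theorem isDistCertificate_graph₁ : graph₁.IsDistCertificate dist₁ :=
  ⟨by decide, by decide, by decide⟩

theorem isDistCertificate_graph₂ : graph₂.IsDistCertificate dist₂ :=
  ⟨by decide, by decide, by decide⟩

theorem gBoundary_graph₁ : gBoundary graph₁ = {1}ᶜ := by
  rw [isDistCertificate_graph₁.gBoundary_eq]
  ext v
  simp only [Set.mem_ofPred_eq, Set.mem_compl_singleton_iff]
  revert v; decide

theorem gBoundary_graph₂ : gBoundary graph₂ = {1}ᶜ := by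
  rw [isDistCertificate_graph₂.gBoundary_eq]
  ext v
  simp only [Set.mem_ofPred_eq, Set.mem_compl_singleton_iff]
  revert v; decide

theorem gDiam_graph₁ : gDiam graph₁ = 3 := by
  rw [isDistCertificate_graph₁.gDiam_eq]; decide

theorem gDiam_graph₂ : gDiam graph₂ = 3 := by
  rw [isDistCertificate_graph₂.gDiam_eq]; decide

theorem not_nonempty_iso_graph₁_graph₂ : ¬ Nonempty (graph₁ ≃g graph₂) := by
  rintro ⟨e⟩
  have h₁ : graph₁.edgeFinset.card = 23 := by decide
  have h₂ : graph₂.edgeFinset.card = 24 := by decide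
  have := e.card_edgeFinset_eq
  omega

theorem exists_non_bdm_split_pair_order_ten :
    ∃ G₁ G₂ : SimpleGraph (Fin 10), G₁.Connected ∧ G₂.Connected ∧
      IsSplitGraph G₁ ∧ IsSplitGraph G₂ ∧
      ¬ Nonempty (G₁ ≃g G₂) ∧ gDiam G₁ = 3 ∧ gDiam G₂ = 3 ∧
      gBoundary G₁ = gBoundary G₂ ∧ (gBoundary G₁).ncard = 9 ∧
      ∀ x ∈ gBoundary G₁, ∀ y ∈ gBoundary G₁, G₁.dist x y = G₂.dist x y := by
  refine ⟨graph₁, graph₂, isDistCertificate_graph₁.connected, isDistCertificate_graph₂.connected,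
    isSplitGraph_splitOf _ _, isSplitGraph_splitOf _ _, not_nonempty_iso_graph₁_graph₂,
    gDiam_graph₁, gDiam_graph₂, gBoundary_graph₁.trans gBoundary_graph₂.symm, ?_, ?_⟩
  · rw [gBoundary_graph₁, Set.ncard_compl, Set.ncard_singleton, Nat.card_eq_fintype_card,
      Fintype.card_fin]
  · simp only [gBoundary_graph₁, Set.mem_compl_singleton_iff, isDistCertificate_graph₁.dist_eq,
      isDistCertificate_graph₂.dist_eq]
    decide
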